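/- (Proposition 1, level a = 1.) Under the monotonic mediator response assumption, the average natural indirect effect at treatment level 1 satisfies max{−α, −p_{01·1}} ≤ δ(1) ≤ min{α, p_{11·1}}. -/

import Mathlib

open MeasureTheory

/-- Average treatment effect on the mediator (ATM): `α = E[M₁ − M₀]`. -/
noncomputable def atm {Ω : Type*} [MeasurableSpace Ω] (P : Measure Ω)
    (M : Fin 2 → Ω → Fin 2) : ℝ :=
  ∫ ω, (((M 1 ω : ℕ) : ℝ) - ((M 0 ω : ℕ) : ℝ)) ∂P

/-- Average natural indirect effect (ANIE) at treatment level `a`: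
`δ(a) = E[Y(a, M₁) − Y(a, M₀)]`. -/
noncomputable def anie {Ω : Type*} [MeasurableSpace Ω] (P : Measure Ω)
    (M : Fin 2 → Ω → Fin 2) (Y : Fin 2 → Fin 2 → Ω → Fin 2) (a : Fin 2) : ℝ :=
  ∫ ω, (((Y a (M 1 ω) ω : ℕ) : ℝ) - ((Y a (M 0 ω) ω : ℕ) : ℝ)) ∂P

/-- Observable probabilities: `p_{ym·a} = P(Y(a, M_a) = y ∧ M_a = m)`. -/
noncomputable def pobs {Ω : Type*} [MeasurableSpace Ω] (P : Measure Ω)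
    (M : Fin 2 → Ω → Fin 2) (Y : Fin 2 → Fin 2 → Ω → Fin 2) (y m a : Fin 2) : ℝ :=
  (P {ω | Y a (M a ω) ω = y ∧ M a ω = m}).toReal

private lemma fin2_cases : ∀ x : Fin 2, x = 0 ∨ x = 1 := by decide

private lemma fin2_cast_bounds : ∀ x : Fin 2, (0:ℝ) ≤ ((x : ℕ) : ℝ) ∧ ((x : ℕ) : ℝ) ≤ 1 := by
  intro x; fin_cases x <;> norm_num

private lemma meas_comp_fin {Ω : Type*} [MeasurableSpace Ω] (M : Ω → Fin 2)
    (Y : Fin 2 → Ω → Fin 2) (hM : Measurable M) (hY : ∀ m, Measurable (Y m)) :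
    Measurable fun ω => Y (M ω) ω := by
  have h : (fun ω => Y (M ω) ω) = fun ω => if M ω = 1 then Y 1 ω else Y 0 ω := by
    funext ω
    rcases fin2_cases (M ω) with h | h <;> simp [h]
  rw [h]
  exact Measurable.ite (hM (measurableSet_singleton 1)) (hY 1) (hY 0)

private lemma meas_cast {Ω : Type*} [MeasurableSpace Ω] {f : Ω → Fin 2} (hf : Measurable f) :
    Measurable fun ω => ((f ω : ℕ) : ℝ) :=
  show Measurable ((fun x : Fin 2 => ((x : ℕ) : ℝ)) ∘ f) from
    Measurable.comp measurable_from_top hf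

private lemma int_cast {Ω : Type*} [MeasurableSpace Ω] (P : Measure Ω) [IsProbabilityMeasure P]
    {f : Ω → Fin 2} (hf : Measurable f) :
    Integrable (fun ω => ((f ω : ℕ) : ℝ)) P := by
  refine (integrable_const (1:ℝ)).mono' (meas_cast hf).aestronglyMeasurable ?_
  filter_upwards with ω
  rw [Real.norm_eq_abs, abs_le]
  have := fin2_cast_bounds (f ω)
  constructor <;> linarith [this.1, this.2]

/-- Proposition 1, level `a = 1`: under monotonic mediator response,
`max{−α, −p_{01·1}} ≤ δ(1) ≤ min{α, p_{11·1}}`. -/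
theorem mmr_bounds_anie_one
    {Ω : Type*} [MeasurableSpace Ω] (P : Measure Ω) [IsProbabilityMeasure P]
    (M : Fin 2 → Ω → Fin 2) (Y : Fin 2 → Fin 2 → Ω → Fin 2)
    (hM : ∀ b, Measurable (M b)) (hY : ∀ a m, Measurable (Y a m))
    (hMMR : ∀ᵐ ω ∂P, M 0 ω ≤ M 1 ω) :
    max (-atm P M) (-pobs P M Y 0 1 1) ≤ anie P M Y 1 ∧
    anie P M Y 1 ≤ min (atm P M) (pobs P M Y 1 1 1) := by
  classical
  -- basic measurability
  have hg1m : Measurable fun ω => Y 1 (M 1 ω) ω := meas_comp_fin (M 1) (Y 1) (hM 1) (hY 1)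
  have hg0m : Measurable fun ω => Y 1 (M 0 ω) ω := meas_comp_fin (M 0) (Y 1) (hM 0) (hY 1)
  -- integrability
  have ig1 : Integrable (fun ω => ((Y 1 (M 1 ω) ω : ℕ) : ℝ)) P := int_cast P hg1m
  have ig0 : Integrable (fun ω => ((Y 1 (M 0 ω) ω : ℕ) : ℝ)) P := int_cast P hg0m
  have ih1 : Integrable (fun ω => ((M 1 ω : ℕ) : ℝ)) P := int_cast P (hM 1)
  have ih0 : Integrable (fun ω => ((M 0 ω : ℕ) : ℝ)) P := int_cast P (hM 0)
  have iG : Integrable (fun ω => ((Y 1 (M 1 ω) ω : ℕ) : ℝ) - ((Y 1 (M 0 ω) ω : ℕ) : ℝ)) P :=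
    ig1.sub ig0
  have iH : Integrable (fun ω => ((M 1 ω : ℕ) : ℝ) - ((M 0 ω : ℕ) : ℝ)) P := ih1.sub ih0
  -- the two events
  set S : Set Ω := {ω | Y 1 (M 1 ω) ω = 1 ∧ M 1 ω = 1} with hS
  set T : Set Ω := {ω | Y 1 (M 1 ω) ω = 0 ∧ M 1 ω = 1} with hT
  have hSmeas : MeasurableSet S := by
    have : S = (fun ω => Y 1 (M 1 ω) ω) ⁻¹' {1} ∩ (M 1) ⁻¹' {1} := by
      ext ω; simp [hS, Set.mem_inter_iff]
    rw [this]
    exact (hg1m (measurableSet_singleton 1)).inter ((hM 1) (measurableSet_singleton 1))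
  have hTmeas : MeasurableSet T := by
    have : T = (fun ω => Y 1 (M 1 ω) ω) ⁻¹' {0} ∩ (M 1) ⁻¹' {1} := by
      ext ω; simp [hT, Set.mem_inter_iff]
    rw [this]
    exact (hg1m (measurableSet_singleton 0)).inter ((hM 1) (measurableSet_singleton 1))
  have iS : Integrable (S.indicator fun _ => (1:ℝ)) P :=
    (integrable_const (1:ℝ)).indicator hSmeas
  have iT : Integrable (T.indicator fun _ => (1:ℝ)) P :=
    (integrable_const (1:ℝ)).indicator hTmeas
  have hSint : ∫ ω, S.indicator (fun _ => (1:ℝ)) ω ∂P = (P S).toReal := by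
    rw [integral_indicator_const (1:ℝ) hSmeas, smul_eq_mul, mul_one]; rfl
  have hTint : ∫ ω, T.indicator (fun _ => (1:ℝ)) ω ∂P = (P T).toReal := by
    rw [integral_indicator_const (1:ℝ) hTmeas, smul_eq_mul, mul_one]; rfl
  -- pointwise a.e. inequalities
  have hub1 : anie P M Y 1 ≤ atm P M := by
    refine integral_mono_ae iG iH ?_
    filter_upwards [hMMR] with ω hω
    rcases fin2_cases (M 0 ω) with h0 | h0 <;> rcases fin2_cases (M 1 ω) with h1 | h1
    · rw [h0, h1]; simp
    · rw [h0, h1]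
      have b1 := fin2_cast_bounds (Y 1 1 ω)
      have b0 := fin2_cast_bounds (Y 1 0 ω)
      simp only [Fin.val_zero, Fin.val_one, Nat.cast_zero, Nat.cast_one]
      linarith [b1.2, b0.1]
    · rw [h0, h1] at hω; exact absurd hω (by decide)
    · rw [h0, h1]; simp
  have hlb1 : -atm P M ≤ anie P M Y 1 := by
    have : -atm P M = ∫ ω, -(((M 1 ω : ℕ) : ℝ) - ((M 0 ω : ℕ) : ℝ)) ∂P := by
      rw [integral_neg]; rfl
    rw [this]
    refine integral_mono_ae iH.neg iG ?_
    filter_upwards [hMMR] with ω hω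
    rcases fin2_cases (M 0 ω) with h0 | h0 <;> rcases fin2_cases (M 1 ω) with h1 | h1
    · rw [h0, h1]; simp
    · rw [h0, h1]
      have b1 := fin2_cast_bounds (Y 1 1 ω)
      have b0 := fin2_cast_bounds (Y 1 0 ω)
      simp only [Fin.val_zero, Fin.val_one, Nat.cast_zero, Nat.cast_one]
      linarith [b1.1, b0.2]
    · rw [h0, h1] at hω; exact absurd hω (by decide)
    · rw [h0, h1]; simp
  have hub2 : anie P M Y 1 ≤ pobs P M Y 1 1 1 := by
    have hpe : pobs P M Y 1 1 1 = (P S).toReal := rfl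
    rw [hpe, ← hSint]
    refine integral_mono_ae iG iS ?_
    filter_upwards [hMMR] with ω hω
    have hind0 : (0:ℝ) ≤ S.indicator (fun _ => (1:ℝ)) ω :=
      Set.indicator_nonneg (fun _ _ => zero_le_one) ω
    rcases fin2_cases (M 0 ω) with h0 | h0 <;> rcases fin2_cases (M 1 ω) with h1 | h1
    · rw [h0, h1]; simpa using hind0
    · rcases fin2_cases (Y 1 (M 1 ω) ω) with hy | hy
      · have b0 := fin2_cast_bounds (Y 1 (M 0 ω) ω)
        rw [hy]
        simp only [Fin.val_zero, Nat.cast_zero]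
        linarith [b0.1]
      · have hmem : ω ∈ S := ⟨hy, h1⟩
        rw [Set.indicator_of_mem hmem]
        have b0 := fin2_cast_bounds (Y 1 (M 0 ω) ω)
        rw [hy]
        simp only [Fin.val_one, Nat.cast_one]
        linarith [b0.1]
    · rw [h0, h1] at hω; exact absurd hω (by decide)
    · rw [h0, h1]; simpa using hind0
  have hlb2 : -pobs P M Y 0 1 1 ≤ anie P M Y 1 := by
    have hpe : pobs P M Y 0 1 1 = (P T).toReal := rfl
    rw [hpe, ← hTint]
    have : -∫ ω, T.indicator (fun _ => (1:ℝ)) ω ∂P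
        = ∫ ω, -(T.indicator (fun _ => (1:ℝ)) ω) ∂P := by rw [integral_neg]
    rw [this]
    refine integral_mono_ae iT.neg iG ?_
    filter_upwards [hMMR] with ω hω
    have hind0 : (0:ℝ) ≤ T.indicator (fun _ => (1:ℝ)) ω :=
      Set.indicator_nonneg (fun _ _ => zero_le_one) ω
    rcases fin2_cases (M 0 ω) with h0 | h0 <;> rcases fin2_cases (M 1 ω) with h1 | h1
    · rw [h0, h1]; simpa using hind0
    · rcases fin2_cases (Y 1 (M 1 ω) ω) with hy | hy
      · have hmem : ω ∈ T := ⟨hy, h1⟩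
        rw [Set.indicator_of_mem hmem]
        have b0 := fin2_cast_bounds (Y 1 (M 0 ω) ω)
        rw [hy]
        simp only [Fin.val_zero, Nat.cast_zero]
        linarith [b0.2]
      · have b0 := fin2_cast_bounds (Y 1 (M 0 ω) ω)
        rw [hy]
        simp only [Fin.val_one, Nat.cast_one]
        linarith [b0.2, hind0]
    · rw [h0, h1] at hω; exact absurd hω (by decide)
    · rw [h0, h1]; simpa using hind0
  exact ⟨max_le hlb1 hlb2, le_min hub1 hub2⟩
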